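/- Let g ≥ 2 and d₀ ∈ {0,1,2,3} be integers, let m_0, …, m_{g−2} be natural numbers, let p₀ be a nonzero complex number, and define the polynomial p(t) = p₀·∏_{k=0}^{g−2}(t⁴ − (2k)⁴)^{m_k} ∈ ℂ[t] of degree d, with coefficients p(t) = Σ_{j=0}^{d} p_j t^j. Let a : ℕ → ℂ be a sequence and C a nonzero complex number such that for every n ∈ ℕ: Σ_{j=0}^{d} p_j·a(n+j) = C·(2g−2)^n if n ≡ d₀ (mod 4), and Σ_{j=0}^{d} p_j·a(n+j) = 0 otherwise. Then there exists a nonzero complex number c such that a(d₀ + 4n)/(2g−2)^{d₀+4n} → c as n → ∞. -/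

import Mathlib

/-!
The recurrence says `p(S) a = f` for the shift operator `S`, where `f n = C₀ μⁿ` on the residue
class of `d₀` mod 4 and `0` elsewhere, `μ = 2g - 2`. Since `p` is a polynomial in `t⁴` and
`S⁴ f = μ⁴ f`, the sequence `f / p(μ)` is a particular solution. Every root `r` of `p` satisfies
`|r| = 2k < μ`, and for such `r` the factor `S - r` reflects `o(μⁿ)` by a contraction argument;
hence the homogeneous part `a - f / p(μ)` is `o(μⁿ)`, and along `n ≡ d₀ (mod 4)` this leaves
`a n / μⁿ → C₀ / p(μ)`.
-/

open Polynomial Filter Asymptotics Topology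

section Shift

variable {R : Type*}

def seqShift (R : Type*) [Semiring R] : Module.End R (ℕ → R) where
  toFun b n := b (n + 1)
  map_add' _ _ := rfl
  map_smul' _ _ := rfl

theorem seqShift_pow_apply [Semiring R] (k : ℕ) (b : ℕ → R) (n : ℕ) :
    (seqShift R ^ k) b n = b (n + k) := by
  induction k generalizing b with
  | zero => rfl
  | succ k ih => rw [pow_succ, Module.End.mul_apply, ih]; rfl

theorem aeval_seqShift_apply [CommSemiring R] (q : R[X]) (b : ℕ → R) (n : ℕ) :
    aeval (seqShift R) q b n = ∑ j ∈ Finset.range (q.natDegree + 1), q.coeff j * b (n + j) := by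
  simp [aeval_eq_sum_range, LinearMap.sum_apply, seqShift_pow_apply]

def geomOnResidue [Semiring R] (k d₀ : ℕ) (c μ : R) (n : ℕ) : R :=
  if n % k = d₀ % k then c * μ ^ n else 0

theorem geomOnResidue_add_mul [Semiring R] (k d₀ : ℕ) (c μ : R) (n : ℕ) :
    geomOnResidue k d₀ c μ (d₀ + k * n) = c * μ ^ (d₀ + k * n) := by
  simp [geomOnResidue]

theorem seqShift_pow_geomOnResidue [CommSemiring R] (k d₀ : ℕ) (c μ : R) :
    (seqShift R ^ k) (geomOnResidue k d₀ c μ) = μ ^ k • geomOnResidue k d₀ c μ := by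
  ext n
  simp only [seqShift_pow_apply, geomOnResidue, Nat.add_mod_right, Pi.smul_apply, smul_eq_mul]
  split_ifs <;> ring

theorem aeval_comp_X_pow_apply_of_eq_smul [CommRing R] {M : Type*} [AddCommGroup M] [Module R M]
    {T : Module.End R M} {x : M} {μ : R} {k : ℕ} (hx : (T ^ k) x = μ ^ k • x) (q : R[X]) :
    aeval T (q.comp (X ^ k)) x = (q.comp (X ^ k)).eval μ • x := by
  rw [aeval_comp, map_pow, aeval_X, Module.End.aeval_apply_of_mem_apply_eq_smul hx,
    eval_comp, eval_pow, eval_X]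

end Shift

theorem le_pow_mul_add_of_le_mul_add {u : ℕ → ℝ} {q δ : ℝ} {N : ℕ} (hq : 0 ≤ q)
    (hu : ∀ n ≥ N, u (n + 1) ≤ q * u n + (1 - q) * δ) (k : ℕ) :
    u (N + k) ≤ q ^ k * u N + (1 - q ^ k) * δ := by
  induction k with
  | zero => simp
  | succ k ih =>
    calc u (N + (k + 1)) ≤ q * u (N + k) + (1 - q) * δ := hu (N + k) (by omega)
      _ ≤ q * (q ^ k * u N + (1 - q ^ k) * δ) + (1 - q) * δ := by gcongr
      _ = q ^ (k + 1) * u N + (1 - q ^ (k + 1)) * δ := by ring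

theorem tendsto_zero_of_le_mul_add {u v : ℕ → ℝ} {q : ℝ} (hq₀ : 0 ≤ q) (hq₁ : q < 1)
    (hu₀ : ∀ n, 0 ≤ u n) (hu : ∀ n, u (n + 1) ≤ q * u n + v n)
    (hv : Tendsto v atTop (𝓝 0)) : Tendsto u atTop (𝓝 0) := by
  refine tendsto_order.2 ⟨fun a ha => .of_forall fun n => ha.trans_le (hu₀ n), fun ε hε => ?_⟩
  have hδ : 0 < (1 - q) * (ε / 2) := by nlinarith
  obtain ⟨N, hN⟩ := eventually_atTop.1 (hv.eventually (gt_mem_nhds hδ))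
  have hbound (k : ℕ) : u (N + k) ≤ q ^ k * u N + ε / 2 := by
    have hgeom := le_pow_mul_add_of_le_mul_add hq₀
      (fun n hn => (hu n).trans (by gcongr; exact (hN n hn).le)) k
    nlinarith [pow_nonneg hq₀ k]
  have hgeom : ∀ᶠ k in atTop, q ^ k * u N < ε / 2 :=
    ((tendsto_pow_atTop_nhds_zero_of_lt_one hq₀ hq₁).mul_const (u N)).eventually
      (gt_mem_nhds (by simpa using half_pos hε))
  filter_upwards [(tendsto_sub_atTop_nat N).eventually hgeom, eventually_ge_atTop N] with n hn hNn
  have hn' := hbound (n - N)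
  rw [Nat.add_sub_cancel' hNn] at hn'
  linarith

section LittleO

variable {𝕜 : Type*} [NormedField 𝕜]

theorem isLittleO_pow_of_isLittleO_sub_mul {b : ℕ → 𝕜} {r μ : 𝕜} (hr : ‖r‖ < ‖μ‖)
    (hb : (fun n => b (n + 1) - r * b n) =o[atTop] (μ ^ ·)) : b =o[atTop] (μ ^ ·) := by
  have hμ : μ ≠ 0 := norm_pos_iff.1 ((norm_nonneg r).trans_lt hr)
  rw [isLittleO_iff_tendsto fun n h => absurd h (pow_ne_zero n hμ),
    tendsto_zero_iff_norm_tendsto_zero]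
    at hb ⊢
  refine tendsto_zero_of_le_mul_add (q := ‖r / μ‖)
    (v := fun n => ‖(b (n + 1) - r * b n) / μ ^ n‖ / ‖μ‖) (norm_nonneg _) ?_
    (fun n => norm_nonneg _) (fun n => ?_) (by simpa using hb.div_const ‖μ‖)
  · rwa [norm_div, div_lt_one (norm_pos_iff.2 hμ)]
  calc ‖b (n + 1) / μ ^ (n + 1)‖
      = ‖r / μ * (b n / μ ^ n) + (b (n + 1) - r * b n) / μ ^ n / μ‖ := by
        congr 1; field_simp; ring
    _ ≤ ‖r / μ‖ * ‖b n / μ ^ n‖ + ‖(b (n + 1) - r * b n) / μ ^ n‖ / ‖μ‖ := by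
        rw [← norm_mul, ← norm_div]; exact norm_add_le _ _

def ReflectsLittleO (μ : 𝕜) (q : 𝕜[X]) : Prop :=
  ∀ b : ℕ → 𝕜, aeval (seqShift 𝕜) q b =o[atTop] (μ ^ ·) → b =o[atTop] (μ ^ ·)

theorem ReflectsLittleO.mul {μ : 𝕜} {p q : 𝕜[X]} (hp : ReflectsLittleO μ p)
    (hq : ReflectsLittleO μ q) : ReflectsLittleO μ (p * q) := fun b hb =>
  hq b (hp _ (by rwa [map_mul, Module.End.mul_apply] at hb))

theorem reflectsLittleO_C {μ c : 𝕜} (hc : c ≠ 0) : ReflectsLittleO μ (C c) := fun b hb => by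
  simpa [Module.algebraMap_end_apply, inv_smul_smul₀ hc] using hb.const_smul_left c⁻¹

theorem reflectsLittleO_X_sub_C {μ r : 𝕜} (hr : ‖r‖ < ‖μ‖) : ReflectsLittleO μ (X - C r) :=
  fun b hb => isLittleO_pow_of_isLittleO_sub_mul hr
    (hb.congr_left fun n => by simp [Module.algebraMap_end_apply, seqShift])

theorem reflectsLittleO_of_forall_mem_roots [IsAlgClosed 𝕜] {μ : 𝕜} {q : 𝕜[X]} (hq : q ≠ 0)
    (hroots : ∀ r ∈ q.roots, ‖r‖ < ‖μ‖) : ReflectsLittleO μ q := by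
  rw [← C_leadingCoeff_mul_prod_multiset_X_sub_C (p := q) IsAlgClosed.card_roots_eq_natDegree]
  refine (reflectsLittleO_C (leadingCoeff_ne_zero.2 hq)).mul
    (Multiset.prod_induction _ _ (fun _ _ => .mul) (fun b hb => by simpa using hb) ?_)
  exact Multiset.forall_mem_map_iff.2 fun r hr => reflectsLittleO_X_sub_C (hroots r hr)

theorem isLittleO_sub_of_aeval_seqShift_eq [IsAlgClosed 𝕜] {μ : 𝕜} {q : 𝕜[X]} (hq : q ≠ 0)
    (hroots : ∀ r ∈ q.roots, ‖r‖ < ‖μ‖) {a b : ℕ → 𝕜}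
    (hab : aeval (seqShift 𝕜) q a = aeval (seqShift 𝕜) q b) : (a - b) =o[atTop] (μ ^ ·) :=
  reflectsLittleO_of_forall_mem_roots hq hroots _ (by
    rw [map_sub, hab, sub_self]; exact isLittleO_zero _ _)

theorem tendsto_div_pow_of_isLittleO_sub {a f : ℕ → 𝕜} {μ c : 𝕜} {φ : ℕ → ℕ} (hμ : μ ≠ 0)
    (hφ : Tendsto φ atTop atTop) (h : (a - f) =o[atTop] (μ ^ ·))
    (hf : ∀ n, f (φ n) = c * μ ^ φ n) :
    Tendsto (fun n => a (φ n) / μ ^ φ n) atTop (𝓝 c) := by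
  have := (h.tendsto_div_nhds_zero.comp hφ).add_const c
  rw [zero_add] at this
  refine this.congr fun n => ?_
  have := pow_ne_zero (φ n) hμ
  simp only [Function.comp_apply, Pi.sub_apply, hf]
  field_simp
  ring

end LittleO

theorem norm_lt_of_isRoot_prod (N : ℕ) (m : ℕ → ℕ) {r : ℂ}
    (hr : (∏ k ∈ Finset.range N, (X ^ 4 - C ((2 * k : ℂ) ^ 4)) ^ m k).IsRoot r) :
    ‖r‖ < 2 * N := by
  obtain ⟨k, hk, hrk⟩ := Finset.prod_eq_zero_iff.1 (by simpa [eval_prod] using hr)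
  have hnorm : ‖r‖ = 2 * k := by
    simpa using congrArg norm (sub_eq_zero.1 (eq_zero_of_pow_eq_zero hrk))
  have hkN : (k : ℝ) < N := by exact_mod_cast Finset.mem_range.1 hk
  linarith

open Polynomial Filter in
theorem donaldson_asymptotics_general (g : ℕ) (hg : 2 ≤ g) (d₀ : ℕ)
    (m : ℕ → ℕ) (p₀ : ℂ) (hp₀ : p₀ ≠ 0)
    (p : Polynomial ℂ)
    (hp : p = C p₀ * ∏ k ∈ Finset.range (g - 1),
      (X ^ 4 - C ((2 * k : ℂ) ^ 4)) ^ (m k))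
    (d : ℕ) (hd : d = p.natDegree)
    (a : ℕ → ℂ) (C₀ : ℂ) (hC₀ : C₀ ≠ 0)
    (hrec : ∀ n : ℕ,
      (n % 4 = d₀ % 4 →
        ∑ j ∈ Finset.range (d + 1), p.coeff j * a (n + j) =
          C₀ * (2 * (g : ℂ) - 2) ^ n) ∧
      (n % 4 ≠ d₀ % 4 →
        ∑ j ∈ Finset.range (d + 1), p.coeff j * a (n + j) = 0)) :
    ∃ c : ℂ, c ≠ 0 ∧
      Tendsto (fun n : ℕ => a (d₀ + 4 * n) / (2 * (g : ℂ) - 2) ^ (d₀ + 4 * n))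
        atTop (nhds c) := by
  set μ : ℂ := 2 * (g : ℂ) - 2
  have hμ : ‖μ‖ = 2 * (g - 1 : ℕ) := by
    rw [show μ = ((2 * (g - 1) : ℕ) : ℂ) by push_cast [Nat.cast_sub (by omega : 1 ≤ g)]; ring]
    simp
  have hroots (r : ℂ) (hr : p.IsRoot r) : ‖r‖ < ‖μ‖ := by
    rw [hp, IsRoot, eval_mul, eval_C, mul_eq_zero] at hr
    exact hμ ▸ norm_lt_of_isRoot_prod _ m (hr.resolve_left hp₀)
  have hev : p.eval μ ≠ 0 := fun h => (hroots μ h).false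
  have hcomp : p = (C p₀ * ∏ k ∈ Finset.range (g - 1),
      (X - C ((2 * k : ℂ) ^ 4)) ^ (m k)).comp (X ^ 4) := by
    simp [hp, mul_comp, prod_comp]
  set f := geomOnResidue 4 d₀ C₀ μ
  have hpf : aeval (seqShift ℂ) p f = p.eval μ • f := by
    rw [hcomp]; exact aeval_comp_X_pow_apply_of_eq_smul (seqShift_pow_geomOnResidue ..) _
  have hpa : aeval (seqShift ℂ) p a = f := by
    ext n
    rw [aeval_seqShift_apply, ← hd]
    simp only [f, geomOnResidue]
    split_ifs with hn
    exacts [(hrec n).1 hn, (hrec n).2 hn]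
  have hlo := isLittleO_sub_of_aeval_seqShift_eq (a := a) (b := (p.eval μ)⁻¹ • f)
    (fun h => hev (by rw [h, eval_zero])) (fun r hr => hroots r (isRoot_of_mem_roots hr))
    (by rw [map_smul, hpf, hpa, inv_smul_smul₀ hev])
  refine ⟨(p.eval μ)⁻¹ * C₀, mul_ne_zero (inv_ne_zero hev) hC₀,
    tendsto_div_pow_of_isLittleO_sub ?_ ?_ hlo fun n => ?_⟩
  · exact norm_ne_zero_iff.1 (by rw [hμ]; norm_cast; omega)
  · exact (strictMono_nat_of_lt_succ fun n => by omega).tendsto_atTop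
  simp [f, geomOnResidue_add_mul, mul_assoc]

open Polynomial Filter in
/-- Generating-function asymptotics lemma: if
`p(t) = p₀·∏_{k=0}^{g-2}(t⁴-(2k)⁴)^{m_k}` has degree `d` and coefficients
`p_j`, and the sequence `a` satisfies `∑_{j=0}^{d} p_j·a(n+j) = C(2g-2)ⁿ` for
`n ≡ d₀ (mod 4)` and `= 0` otherwise, with `C ≠ 0`, then
`a(d₀+4n)/(2g-2)^{d₀+4n}` converges to some nonzero limit `c`. -/
theorem donaldson_asymptotics (g : ℕ) (hg : 2 ≤ g) (d₀ : ℕ) (hd₀ : d₀ ≤ 3)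
    (m : ℕ → ℕ) (p₀ : ℂ) (hp₀ : p₀ ≠ 0)
    (p : Polynomial ℂ)
    (hp : p = C p₀ * ∏ k ∈ Finset.range (g - 1),
      (X ^ 4 - C ((2 * k : ℂ) ^ 4)) ^ (m k))
    (d : ℕ) (hd : d = p.natDegree)
    (a : ℕ → ℂ) (C₀ : ℂ) (hC₀ : C₀ ≠ 0)
    (hrec : ∀ n : ℕ,
      (n % 4 = d₀ % 4 →
        ∑ j ∈ Finset.range (d + 1), p.coeff j * a (n + j) =
          C₀ * (2 * (g : ℂ) - 2) ^ n) ∧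
      (n % 4 ≠ d₀ % 4 →
        ∑ j ∈ Finset.range (d + 1), p.coeff j * a (n + j) = 0)) :
    ∃ c : ℂ, c ≠ 0 ∧
      Tendsto (fun n : ℕ => a (d₀ + 4 * n) / (2 * (g : ℂ) - 2) ^ (d₀ + 4 * n))
        atTop (nhds c) :=
  donaldson_asymptotics_general g hg d₀ m p₀ hp₀ p hp d hd a C₀ hC₀ hrec
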